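/- arXiv:1403.4109 — 5 statements merged into one kernel-verified Lean document; each statement's English description precedes it below -/
import Mathlib

section
/- For a reversible irreducible Markov chain on a finite state space, there exists a 'hidden vertex' w, i.e., a state w such that H(w,x) ≤ H(x,w) for all states x, where H denotes expected hitting time. -/
/-!
Put `Φ a = ∑ z, π z * H z a` and `h_b = H · b`. Reversibility makes `P` self-adjoint for the
`π`-weighted inner product, and Kac's formula says `π * (h_b - P h_b) = π - δ_b`. Pairing
`h_a` against `(I - P) h_b` both ways therefore gives `Φ a - H b a = Φ b - H a b`, so
`H w x - H x w = Φ x - Φ w`, and any maximiser `w` of `Φ` is a hidden vertex.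
-/

open Matrix

theorem Function.eq_of_sum_eq_of_forall_ne {ι M : Type*} [Fintype ι] [DecidableEq ι]
    [AddCommGroup M] {f g : ι → M} (b : ι) (hsum : ∑ x, f x = ∑ x, g x)
    (hne : ∀ x, x ≠ b → f x = g x) : f = g := by
  funext x
  by_cases hx : x = b
  · subst hx
    have hcompl : ∑ y ∈ {x}ᶜ, f y = ∑ y ∈ {x}ᶜ, g y :=
      Finset.sum_congr rfl fun y hy => hne y (by simpa using hy)
    rw [Fintype.sum_eq_add_sum_compl x f, Fintype.sum_eq_add_sum_compl x g, hcompl] at hsum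
    exact add_right_cancel hsum
  · exact hne x hx

theorem mul_dotProduct_eq_dotProduct_mul {ι R : Type*} [Fintype ι] [CommSemiring R]
    (u v w : ι → R) : (u * v) ⬝ᵥ w = v ⬝ᵥ (u * w) := by
  simp only [dotProduct, Pi.mul_apply]
  exact Finset.sum_congr rfl fun x _ => by ring

section Reversible

variable {Ω : Type*} [Fintype Ω] {P : Matrix Ω Ω ℝ} {π : Ω → ℝ}

theorem vecMul_mul_eq_mul_mulVec (hrev : ∀ x y, π x * P x y = π y * P y x) (u : Ω → ℝ) :
    (π * u) ᵥ* P = π * (P *ᵥ u) := by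
  funext z
  simp only [vecMul, mulVec, dotProduct, Pi.mul_apply, Finset.mul_sum]
  exact Finset.sum_congr rfl fun x _ => by rw [mul_right_comm, hrev x z, mul_assoc]

theorem vecMul_eq_self_of_reversible (hrev : ∀ x y, π x * P x y = π y * P y x)
    (hProw : ∀ x, ∑ y, P x y = 1) : π ᵥ* P = π := by
  have hP1 : P *ᵥ 1 = 1 := funext fun x => by simp [mulVec, dotProduct, hProw]
  simpa [hP1] using vecMul_mul_eq_mul_mulVec hrev 1

theorem mul_dotProduct_mulVec_comm (hrev : ∀ x y, π x * P x y = π y * P y x) (u w : Ω → ℝ) :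
    (π * u) ⬝ᵥ (P *ᵥ w) = (π * w) ⬝ᵥ (P *ᵥ u) := by
  rw [dotProduct_mulVec, vecMul_mul_eq_mul_mulVec hrev, mul_dotProduct_eq_dotProduct_mul,
    dotProduct_comm]

end Reversible

section HittingTime

variable {Ω : Type*} [Fintype Ω] {P : Matrix Ω Ω ℝ} {π : Ω → ℝ} {H : Ω → Ω → ℝ}

/-- Kac's formula, in a form that needs no division by `π b`. -/
theorem mul_hittingTime_sub_mulVec [DecidableEq Ω] (hstat : π ᵥ* P = π) (hπsum : ∑ x, π x = 1)
    (hHrec : ∀ x y, x ≠ y → H x y = 1 + ∑ z, P x z * H z y) (b : Ω) :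
    π * ((H · b) - P *ᵥ (H · b)) = π - Pi.single b 1 := by
  refine Function.eq_of_sum_eq_of_forall_ne b ?_ fun x hx => ?_
  · have hzero : π ⬝ᵥ ((H · b) - P *ᵥ (H · b)) = 0 := by
      rw [dotProduct_sub, dotProduct_mulVec, hstat, sub_self]
    simpa [dotProduct, hπsum] using hzero
  · simp [hHrec x b hx, mulVec, dotProduct, hx]

theorem potential_sub_hittingTime_comm (hrev : ∀ x y, π x * P x y = π y * P y x)
    (hProw : ∀ x, ∑ y, P x y = 1) (hπsum : ∑ x, π x = 1)
    (hHrec : ∀ x y, x ≠ y → H x y = 1 + ∑ z, P x z * H z y) (a b : Ω) :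
    π ⬝ᵥ (H · a) - H b a = π ⬝ᵥ (H · b) - H a b := by
  classical
  have hpair : ∀ a b, (π * (H · a)) ⬝ᵥ ((H · b) - P *ᵥ (H · b)) = π ⬝ᵥ (H · a) - H b a := by
    intro a b
    rw [mul_dotProduct_eq_dotProduct_mul,
      mul_hittingTime_sub_mulVec (vecMul_eq_self_of_reversible hrev hProw) hπsum hHrec b,
      dotProduct_sub, dotProduct_single, mul_one, dotProduct_comm]
  rw [← hpair, ← hpair, dotProduct_sub, dotProduct_sub, mul_dotProduct_mulVec_comm hrev,
    mul_dotProduct_eq_dotProduct_mul, dotProduct_comm]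

end HittingTime

theorem stmt_3_general {Ω : Type*} [Fintype Ω]
    (P : Matrix Ω Ω ℝ)
    (hProw : ∀ x, ∑ y, P x y = 1)
    (π : Ω → ℝ) (hπsum : ∑ x, π x = 1)
    (hrev : ∀ x y, π x * P x y = π y * P y x)
    (H : Ω → Ω → ℝ)
    (hHrec : ∀ x y, x ≠ y → H x y = 1 + ∑ z, P x z * H z y) :
    ∃ w : Ω, ∀ x : Ω, H w x ≤ H x w := by
  have hne : (Finset.univ : Finset Ω).Nonempty :=
    Finset.nonempty_of_sum_ne_zero (by rw [hπsum]; exact one_ne_zero)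
  obtain ⟨w, -, hw⟩ := Finset.exists_max_image Finset.univ (fun a => π ⬝ᵥ (H · a)) hne
  refine ⟨w, fun x => ?_⟩
  have := potential_sub_hittingTime_comm hrev hProw hπsum hHrec w x
  linarith [hw x (Finset.mem_univ x)]

/-- Every reversible irreducible Markov chain on a finite state space has a `hidden vertex`
`w`, i.e. a state such that `H(w,x) ≤ H(x,w)` for all states `x`, where `H` denotes
the expected hitting time (characterized by its one-step recursion). -/
theorem stmt_3 {Ω : Type*} [Fintype Ω] [DecidableEq Ω]
    (P : Matrix Ω Ω ℝ)
    (hPnonneg : ∀ x y, 0 ≤ P x y)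
    (hProw : ∀ x, ∑ y, P x y = 1)
    (hirr : ∀ x y : Ω, ∃ k : ℕ, 0 < (P ^ k) x y)
    (π : Ω → ℝ) (hπpos : ∀ x, 0 < π x) (hπsum : ∑ x, π x = 1)
    (hrev : ∀ x y, π x * P x y = π y * P y x)
    (H : Ω → Ω → ℝ)
    (hH0 : ∀ x, H x x = 0)
    (hHrec : ∀ x y, x ≠ y → H x y = 1 + ∑ z, P x z * H z y) :
    ∃ w : Ω, ∀ x : Ω, H w x ≤ H x w :=
  stmt_3_general P hProw π hπsum hrev H hHrec
end

section
/- For a simple random walk on a connected graph G, the expected hitting time satisfies H(a,z) = (1/2) Σ_x d(x) [R(a↔z) + R(z↔x) - R(a↔x)], where R denotes effective resistance with unit resistances on edges. -/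
/-- `v` is the unit-current voltage for the pair `(a,z)` in the electric network obtained by
placing a unit resistor on every edge of `G`: `v(z) = 0`, a unit current flows out of `a`,
and the net current is zero at every other vertex. -/
def IsUnitCurrentVoltage {V : Type*} [Fintype V] [DecidableEq V]
    (G : SimpleGraph V) [DecidableRel G.Adj] (a z : V) (v : V → ℝ) : Prop :=
  v z = 0 ∧ (∑ y ∈ G.neighborFinset a, (v a - v y)) = 1 ∧
    ∀ x : V, x ≠ a → x ≠ z → (∑ y ∈ G.neighborFinset x, (v x - v y)) = 0

/-- `R` is the effective-resistance function of `G` with unit resistances on edges. -/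
def IsEffectiveResistance {V : Type*} [Fintype V] [DecidableEq V]
    (G : SimpleGraph V) [DecidableRel G.Adj] (R : V → V → ℝ) : Prop :=
  (∀ x, R x x = 0) ∧
    ∀ a z : V, a ≠ z → ∃ v : V → ℝ, IsUnitCurrentVoltage G a z v ∧ R a z = v a

/-!
With `L` the graph Laplacian, a unit-current voltage `v` from `a` to `z` satisfies
`L v = δ_a - δ_z`, and by the recursion the hitting-time function `h = H(·, z)` satisfies
`(L h)(x) = d(x)` for `x ≠ z`, with `h(z) = 0`. Since `L` is symmetric,
`h(a) = ⟨h, L v⟩ = ⟨v, L h⟩ = Σ_x d(x) v(x)`. The same symmetry gives reciprocity of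
voltages, from which `v(x) = (R(a↔z) + R(z↔x) - R(a↔x)) / 2`.
-/

namespace SimpleGraph

open Matrix

universe u

variable {V : Type u} [Fintype V] [DecidableEq V] (G : SimpleGraph V) [DecidableRel G.Adj]

theorem sum_neighborFinset_sub_eq_lapMatrix_mulVec {R : Type*} [CommRing R] (v : V → R)
    (x : V) : ∑ y ∈ G.neighborFinset x, (v x - v y) = (G.lapMatrix R *ᵥ v) x := by
  rw [lapMatrix_mulVec_apply, Finset.sum_sub_distrib, Finset.sum_const, card_neighborFinset_eq_degree,
    nsmul_eq_mul]

theorem dotProduct_lapMatrix_mulVec_comm {R : Type*} [CommRing R] (f g : V → R) :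
    f ⬝ᵥ (G.lapMatrix R *ᵥ g) = g ⬝ᵥ (G.lapMatrix R *ᵥ f) := by
  rw [dotProduct_mulVec, ← mulVec_transpose, (G.isSymm_lapMatrix (R := R)).eq, dotProduct_comm]

theorem lapMatrix_mulVec_apply_eq_degree {h : V → ℝ} {x : V}
    (hx : h x = 1 + (G.degree x : ℝ)⁻¹ * ∑ y ∈ G.neighborFinset x, h y) :
    (G.lapMatrix ℝ *ᵥ h) x = G.degree x := by
  have hsum : (G.degree x : ℝ) * (G.degree x : ℝ)⁻¹ * ∑ y ∈ G.neighborFinset x, h y =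
      ∑ y ∈ G.neighborFinset x, h y := by
    rcases eq_or_ne (G.degree x) 0 with hd | hd
    · rw [← card_neighborFinset_eq_degree, Finset.card_eq_zero] at hd
      simp [hd]
    · rw [mul_inv_cancel₀ (by exact_mod_cast hd), one_mul]
  rw [lapMatrix_mulVec_apply, hx]
  linear_combination hsum

end SimpleGraph

section Network

open Matrix SimpleGraph

universe u

variable {V : Type u} [Fintype V] [DecidableEq V] {G : SimpleGraph V} [DecidableRel G.Adj]

namespace IsUnitCurrentVoltage

variable {a z : V} {v : V → ℝ}

theorem lapMatrix_mulVec (hv : IsUnitCurrentVoltage G a z v) (haz : a ≠ z) :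
    G.lapMatrix ℝ *ᵥ v = Pi.single a 1 - Pi.single z 1 := by
  obtain ⟨-, ha, hx⟩ := hv
  simp only [sum_neighborFinset_sub_eq_lapMatrix_mulVec] at ha hx
  have hsum : ∑ x, (G.lapMatrix ℝ *ᵥ v) x = 0 := by
    simpa [dotProduct, lapMatrix_mulVec_const_eq_zero] using
      G.dotProduct_lapMatrix_mulVec_comm (fun _ ↦ (1 : ℝ)) v
  have hz : (G.lapMatrix ℝ *ᵥ v) z = -1 := by
    rw [Fintype.sum_eq_add a z haz fun x hx' ↦ hx x hx'.1 hx'.2, ha] at hsum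
    linarith
  ext x
  by_cases hxa : x = a
  · subst hxa; simp [ha, haz]
  by_cases hxz : x = z
  · subst hxz; simp [hz, hxa]
  simp [hx x hxa hxz, hxa, hxz]

theorem dotProduct_lapMatrix_mulVec (hv : IsUnitCurrentVoltage G a z v) (haz : a ≠ z)
    (f : V → ℝ) : f ⬝ᵥ (G.lapMatrix ℝ *ᵥ v) = f a - f z := by
  rw [hv.lapMatrix_mulVec haz, dotProduct_sub, dotProduct_single, dotProduct_single, mul_one,
    mul_one]

theorem reciprocity {b c : V} {w : V → ℝ} (hv : IsUnitCurrentVoltage G a z v) (haz : a ≠ z)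
    (hw : IsUnitCurrentVoltage G b c w) (hbc : b ≠ c) : w a - w z = v b - v c := by
  rw [← hv.dotProduct_lapMatrix_mulVec haz, ← hw.dotProduct_lapMatrix_mulVec hbc,
    dotProduct_lapMatrix_mulVec_comm]

end IsUnitCurrentVoltage

namespace IsEffectiveResistance

variable {R : V → V → ℝ}

theorem eq_of_isUnitCurrentVoltage (hR : IsEffectiveResistance G R) {a z : V} {v : V → ℝ}
    (hv : IsUnitCurrentVoltage G a z v) (haz : a ≠ z) : R a z = v a := by
  obtain ⟨w, hw, hRw⟩ := hR.2 a z haz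
  have := hv.reciprocity haz hw haz
  rw [hv.1, hw.1] at this
  linarith

theorem symm (hR : IsEffectiveResistance G R) (a b : V) : R a b = R b a := by
  rcases eq_or_ne a b with rfl | hab
  · rfl
  obtain ⟨v, hv, hRv⟩ := hR.2 a b hab
  obtain ⟨w, hw, hRw⟩ := hR.2 b a hab.symm
  have := hv.reciprocity hab hw hab.symm
  rw [hv.1, hw.1] at this
  linarith

/-- `v x` is the normalized Green function `G_{τ^a_z}(x) / d(x)` of the walk from `a` killed
at `z`. -/
theorem voltage_eq (hR : IsEffectiveResistance G R) {a z : V} {v : V → ℝ}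
    (hv : IsUnitCurrentVoltage G a z v) (haz : a ≠ z) (x : V) :
    v x = (R a z + R z x - R a x) / 2 := by
  have hRa := hR.eq_of_isUnitCurrentVoltage hv haz
  rcases eq_or_ne x z with rfl | hxz
  · rw [hv.1, hR.1]; ring
  rcases eq_or_ne x a with rfl | hxa
  · rw [hR.1, hR.symm z, hRa]; ring
  obtain ⟨w, hw, hRw⟩ := hR.2 x z hxz
  obtain ⟨y, hy, hRy⟩ := hR.2 a x hxa.symm
  have hvw := hv.reciprocity haz hw hxz
  have hvy := hv.reciprocity haz hy hxa.symm
  have hwy := hw.reciprocity hxz hy hxa.symm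
  rw [hv.1, hw.1] at hvw
  rw [hR.symm z, hRa, hRw, hRy]
  linarith [hy.1]

end IsEffectiveResistance

theorem IsUnitCurrentVoltage.eq_sum_degree_mul {a z : V} {v h : V → ℝ}
    (hv : IsUnitCurrentVoltage G a z v) (haz : a ≠ z) (hz : h z = 0)
    (hL : ∀ x, x ≠ z → (G.lapMatrix ℝ *ᵥ h) x = G.degree x) :
    h a = ∑ x, (G.degree x : ℝ) * v x := by
  have := hv.dotProduct_lapMatrix_mulVec haz h
  rw [hz, sub_zero, dotProduct_lapMatrix_mulVec_comm] at this
  rw [← this, dotProduct]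
  refine Finset.sum_congr rfl fun x _ ↦ ?_
  rcases eq_or_ne x z with rfl | hxz
  · simp [hv.1]
  · rw [hL x hxz, mul_comm]

theorem stmt_7_general {V : Type*} [Fintype V] [DecidableEq V]
    (G : SimpleGraph V) [DecidableRel G.Adj]
    (H : V → V → ℝ)
    (hH0 : ∀ x, H x x = 0)
    (hHrec : ∀ x z, x ≠ z →
      H x z = 1 + ((G.degree x : ℝ))⁻¹ * ∑ y ∈ G.neighborFinset x, H y z)
    (R : V → V → ℝ) (hR : IsEffectiveResistance G R) :
    ∀ a z : V,
      H a z = (1/2) * ∑ x, (G.degree x : ℝ) * (R a z + R z x - R a x) := by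
  intro a z
  rcases eq_or_ne a z with rfl | haz
  · simp [hH0, hR.1]
  obtain ⟨v, hv, -⟩ := hR.2 a z haz
  rw [hv.eq_sum_degree_mul haz (h := fun b ↦ H b z) (hH0 z)
    fun x hx ↦ G.lapMatrix_mulVec_apply_eq_degree (hHrec x z hx), Finset.mul_sum]
  refine Finset.sum_congr rfl fun x _ ↦ ?_
  rw [hR.voltage_eq hv haz x]
  ring

/-- For a simple random walk on a connected graph `G`, the expected hitting time satisfies
`H(a,z) = (1/2) Σ_x d(x) [R(a↔z) + R(z↔x) - R(a↔x)]`, where `R` denotes effective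
resistance with unit resistances on the edges. -/
theorem stmt_7 {V : Type*} [Fintype V] [DecidableEq V]
    (G : SimpleGraph V) [DecidableRel G.Adj] (hconn : G.Connected)
    (hcard : 2 ≤ Fintype.card V)
    (H : V → V → ℝ)
    (hH0 : ∀ x, H x x = 0)
    (hHrec : ∀ x z, x ≠ z →
      H x z = 1 + ((G.degree x : ℝ))⁻¹ * ∑ y ∈ G.neighborFinset x, H y z)
    (R : V → V → ℝ) (hR : IsEffectiveResistance G R) :
    ∀ a z : V,
      H a z = (1/2) * ∑ x, (G.degree x : ℝ) * (R a z + R z x - R a x) :=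
  stmt_7_general G H hH0 hHrec R hR
end Network
end

section
/- (Random Target Lemma) For an irreducible reversible Markov chain on {1,…,n} with transition matrix P and stationary distribution π, the quantity Σ_j π_j H(i,j) is independent of i and equals Σ_{k=2}^n 1/(1 - α_k(P)), where 1 = α₁ > α₂ ≥ … ≥ α_n are the eigenvalues of P. -/
/-!
Let `M = I - P + 1 πᵀ` and let `Z = M⁻¹` be the fundamental matrix of Kemeny and Snell.
The hitting-time equations together with stationarity give `(I - P) H = J - diag(π)⁻¹`; since
`M 1 = 1`, multiplying by `Z` yields `π_j H(i,j) = Z_jj - Z_ij`, and summing over `j` gives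
`Σ_j π_j H(i,j) = tr Z - 1`, independently of `i`. By the matrix determinant lemma the spectrum of
`M` is that of `I - P` with the eigenvalue `0 = 1 - α₁` replaced by `1`, so
`tr Z = 1 + Σ_{k ≥ 2} 1/(1 - α_k)`.
-/

open Polynomial Matrix

theorem Polynomial.coeff_one_prod_X_sub_C {K ι : Type*} [Field K] [DecidableEq ι]
    (s : Finset ι) (μ : ι → K) (hμ : ∀ i ∈ s, μ i ≠ 0) :
    (∏ i ∈ s, (X - C (μ i))).coeff 1 = -(∏ i ∈ s, -μ i) * ∑ i ∈ s, (μ i)⁻¹ := by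
  induction s using Finset.induction with
  | empty => simp [coeff_one]
  | insert a s ha ih =>
    have hs : ∀ i ∈ s, μ i ≠ 0 := fun i hi => hμ i (Finset.mem_insert_of_mem hi)
    have hμa : μ a ≠ 0 := hμ a (Finset.mem_insert_self a s)
    rw [Finset.prod_insert ha, mul_comm, coeff_mul_X_sub_C, ih hs, coeff_zero_eq_eval_zero,
      eval_prod, Finset.prod_insert ha, Finset.sum_insert ha]
    simp only [eval_sub, eval_X, eval_C, zero_sub]
    field_simp
    ring

namespace Matrix

variable {K n : Type*} [Field K] [Fintype n] [DecidableEq n]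

theorem det_eq_prod_of_charpoly_eq_prod {A : Matrix n n K} {μ : n → K}
    (hA : A.charpoly = ∏ i, (X - C (μ i))) : A.det = ∏ i, μ i := by
  have h := congrArg (eval 0) hA
  rw [eval_charpoly, eval_prod, scalar_apply, diagonal_zero, zero_sub, det_neg] at h
  simp only [eval_sub, eval_X, eval_C, zero_sub, Finset.prod_neg, Finset.card_univ] at h
  exact mul_left_cancel₀ (pow_ne_zero _ (neg_ne_zero.2 one_ne_zero)) h

theorem trace_inv_eq_sum_inv_of_charpoly_eq_prod {A : Matrix n n K} {μ : n → K}
    (hA : A.charpoly = ∏ i, (X - C (μ i))) (hμ : ∀ i, μ i ≠ 0) :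
    A⁻¹.trace = ∑ i, (μ i)⁻¹ := by
  have hdet : A.det = ∏ i, μ i := det_eq_prod_of_charpoly_eq_prod hA
  have hdet0 : A.det ≠ 0 := by rw [hdet]; exact Finset.prod_ne_zero_iff.2 fun i _ => hμ i
  have hunit : IsUnit A.det := isUnit_iff_ne_zero.2 hdet0
  -- `charpoly_inv` applied to `A⁻¹` links `charpoly A` to `charpolyRev A⁻¹`, whose linear
  -- coefficient is `-trace A⁻¹`.
  have key := congrArg (coeff · 1)
    (charpoly_inv A⁻¹ (isUnit_nonsing_inv_iff.2 ((isUnit_iff_isUnit_det A).2 hunit)))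
  simp only [nonsing_inv_nonsing_inv A hunit, det_nonsing_inv, Ring.inverse_eq_inv', inv_inv] at key
  have hC : ((-1 : K[X]) ^ Fintype.card n * C A.det) = C ((-1) ^ Fintype.card n * A.det) := by
    simp only [C_mul, C_pow, C_neg, C_1]
  rw [hA, coeff_one_prod_X_sub_C _ _ fun i _ => hμ i, Finset.prod_neg, ← hdet, hC,
    coeff_C_mul, coeff_charpolyRev_eq_neg_trace, Finset.card_univ] at key
  have hs : ((-1 : K) ^ Fintype.card n * A.det) ≠ 0 := by simp [hdet0]
  exact (mul_left_cancel₀ hs (by linear_combination -key)).symm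

theorem charpoly_one_sub_of_charpoly_eq_prod [Infinite K] {A : Matrix n n K} {μ : n → K}
    (hA : A.charpoly = ∏ i, (X - C (μ i))) : (1 - A).charpoly = ∏ i, (X - C (1 - μ i)) := by
  refine Polynomial.funext fun t => ?_
  have h := congrArg (eval (1 - t)) hA
  have hneg : scalar n t - (1 - A) = -(scalar n (1 - t) - A) := by
    rw [map_sub, map_one]; abel
  rw [eval_charpoly, hneg, det_neg, ← eval_charpoly, h, eval_prod, eval_prod,
    ← Finset.card_univ, ← Finset.prod_neg]
  simp only [eval_sub, eval_X, eval_C, neg_sub]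
  exact Finset.prod_congr rfl fun i _ => by ring

theorem det_one_sub_vecMulVec (u v : n → K) : (1 - vecMulVec u v).det = 1 - v ⬝ᵥ u := by
  rw [sub_eq_add_neg, ← neg_vecMulVec, vecMulVec_eq Unit,
    det_one_add_replicateCol_mul_replicateRow, dotProduct_neg, ← sub_eq_add_neg]

theorem det_sub_vecMulVec_of_mulVec_eq_smul {A : Matrix n n K} (hA : IsUnit A.det)
    {u : n → K} {t : K} (ht : t ≠ 0) (hu : A *ᵥ u = t • u) (v : n → K) :
    (A - vecMulVec u v).det = A.det * (1 - t⁻¹ * (v ⬝ᵥ u)) := by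
  have hinv : A⁻¹ *ᵥ u = t⁻¹ • u := by
    have h : A⁻¹ *ᵥ (A *ᵥ u) = u := by rw [mulVec_mulVec, nonsing_inv_mul A hA, one_mulVec]
    rw [hu, mulVec_smul] at h
    exact (eq_inv_smul_iff₀ ht).2 h
  have hfac : A - vecMulVec u v = A * (1 - vecMulVec (A⁻¹ *ᵥ u) v) := by
    rw [mul_sub, mul_one, mul_vecMulVec, mulVec_mulVec, mul_nonsing_inv A hA, one_mulVec]
  rw [hfac, det_mul, det_one_sub_vecMulVec, hinv, dotProduct_smul, smul_eq_mul]

end Matrix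

section MarkovChain

variable {ι : Type*} [Fintype ι] [DecidableEq ι] {P : Matrix ι ι ℝ} {π : ι → ℝ}

def kemenySnell (P : Matrix ι ι ℝ) (π : ι → ℝ) : Matrix ι ι ℝ :=
  1 - P + vecMulVec 1 π

theorem kemenySnell_mulVec_one (hP : P *ᵥ 1 = 1) (hπ : ∑ x, π x = 1) :
    kemenySnell P π *ᵥ 1 = 1 := by
  rw [kemenySnell, add_mulVec, sub_mulVec, one_mulVec, hP, sub_self, zero_add, vecMulVec_mulVec,
    dotProduct_one, hπ, MulOpposite.op_one, one_smul]

theorem X_mul_charpoly_kemenySnell (hP : P *ᵥ 1 = 1) (hπ : ∑ x, π x = 1) :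
    X * (kemenySnell P π).charpoly = (X - 1) * (1 - P).charpoly := by
  apply eq_of_infinite_eval_eq
  have hfin : ({0} ∪ {t | (1 - P).charpoly.IsRoot t}).Finite :=
    (Set.finite_singleton 0).union (finite_setOfPred_isRoot (charpoly_monic _).ne_zero)
  refine hfin.infinite_compl.mono fun t ht => ?_
  simp only [Set.mem_compl_iff, Set.mem_union, Set.mem_singleton_iff, Set.mem_ofPred_eq,
    not_or, IsRoot.def] at ht
  obtain ⟨ht0, hroot⟩ := ht
  rw [eval_charpoly] at hroot
  set A := scalar ι t - (1 - P)
  have hA : A *ᵥ 1 = t • 1 := by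
    simp [A, sub_mulVec, hP, scalar_apply]
  have hsplit : scalar ι t - kemenySnell P π = A - vecMulVec 1 π := by
    simp only [A, kemenySnell]; abel
  simp only [Set.mem_ofPred_eq, eval_mul, eval_X, eval_sub, eval_one, eval_charpoly, hsplit,
    det_sub_vecMulVec_of_mulVec_eq_smul (isUnit_iff_ne_zero.2 hroot) ht0 hA, dotProduct_one, hπ]
  field_simp
  ring

theorem charpoly_kemenySnell (hP : P *ᵥ 1 = 1) (hπ : ∑ x, π x = 1) {α : ι → ℝ}
    (hchar : P.charpoly = ∏ k, (X - C (α k))) {k₀ : ι} (hk₀ : α k₀ = 1) :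
    (kemenySnell P π).charpoly =
      ∏ k, (X - C (Function.update (fun k => 1 - α k) k₀ 1 k)) := by
  have h := X_mul_charpoly_kemenySnell (π := π) hP hπ
  rw [charpoly_one_sub_of_charpoly_eq_prod hchar,
    ← Finset.mul_prod_erase _ _ (Finset.mem_univ k₀), hk₀, sub_self, C_0, sub_zero,
    mul_left_comm] at h
  rw [← Finset.mul_prod_erase _ _ (Finset.mem_univ k₀), Function.update_self, C_1,
    Finset.prod_congr rfl fun k hk => by rw [Function.update_of_ne (Finset.ne_of_mem_erase hk)]]
  exact mul_left_cancel₀ X_ne_zero h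

variable {H : Matrix ι ι ℝ}

theorem one_sub_mul_eq_of_hitting_rec (hstat : π ᵥ* P = π) (hπ : ∑ x, π x = 1)
    (hπ0 : ∀ x, π x ≠ 0) (hHrec : ∀ x y, x ≠ y → H x y = 1 + ∑ z, P x z * H z y) :
    (1 - P) * H = vecMulVec 1 1 - diagonal π⁻¹ := by
  have hoff : ∀ x y, x ≠ y → ((1 - P) * H) x y = 1 := fun x y hxy => by
    rw [sub_mul, one_mul, Matrix.sub_apply, hHrec x y hxy, mul_apply]; ring
  have hbal : π ᵥ* ((1 - P) * H) = 0 := by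
    rw [← vecMul_vecMul, vecMul_sub, vecMul_one, hstat, sub_self, zero_vecMul]
  ext x y
  rcases eq_or_ne x y with rfl | hxy
  · have h := congrFun hbal x
    rw [vecMul, dotProduct, ← Finset.add_sum_erase _ _ (Finset.mem_univ x),
      Finset.sum_congr rfl fun z hz => by rw [hoff z x (Finset.ne_of_mem_erase hz)]] at h
    have hrest : ∑ z ∈ Finset.univ.erase x, π z = 1 - π x := by
      rw [← hπ, ← Finset.add_sum_erase _ _ (Finset.mem_univ x), add_sub_cancel_left]
    simp only [mul_one, hrest, Pi.zero_apply] at h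
    simp only [Matrix.sub_apply, vecMulVec_apply, diagonal_apply_eq, Pi.one_apply, Pi.inv_apply,
      mul_one]
    field_simp [hπ0 x]
    linarith
  · simp [hoff x y hxy, hxy]

theorem inv_kemenySnell_mulVec_one (hP : P *ᵥ 1 = 1) (hπ : ∑ x, π x = 1)
    (hM : IsUnit (kemenySnell P π).det) : (kemenySnell P π)⁻¹ *ᵥ 1 = 1 := by
  conv_lhs => rw [← kemenySnell_mulVec_one hP hπ]
  rw [mulVec_mulVec, nonsing_inv_mul _ hM, one_mulVec]

theorem hitting_eq_sub_inv_kemenySnell_mul (hP : P *ᵥ 1 = 1) (hπ : ∑ x, π x = 1)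
    (hM : IsUnit (kemenySnell P π).det) (hPH : (1 - P) * H = vecMulVec 1 1 - diagonal π⁻¹) :
    H = vecMulVec 1 (1 + π ᵥ* H) - (kemenySnell P π)⁻¹ * diagonal π⁻¹ := by
  have hMH : kemenySnell P π * H = vecMulVec 1 (1 + π ᵥ* H) - diagonal π⁻¹ := by
    rw [kemenySnell, add_mul, hPH, vecMulVec_mul]
    ext x y
    simp only [Matrix.add_apply, Matrix.sub_apply, vecMulVec_apply, Pi.add_apply]
    ring
  calc H = (kemenySnell P π)⁻¹ * (kemenySnell P π * H) := by
        rw [← Matrix.mul_assoc, nonsing_inv_mul _ hM, Matrix.one_mul]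
    _ = _ := by rw [hMH, Matrix.mul_sub, mul_vecMulVec, inv_kemenySnell_mulVec_one hP hπ hM]

theorem sum_mul_hitting_eq_trace_inv_kemenySnell_sub_one (hP : P *ᵥ 1 = 1)
    (hstat : π ᵥ* P = π) (hπ : ∑ x, π x = 1) (hπ0 : ∀ x, π x ≠ 0)
    (hH0 : ∀ x, H x x = 0) (hHrec : ∀ x y, x ≠ y → H x y = 1 + ∑ z, P x z * H z y)
    (hM : IsUnit (kemenySnell P π).det) (i : ι) :
    ∑ j, π j * H i j = (kemenySnell P π)⁻¹.trace - 1 := by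
  set Z := (kemenySnell P π)⁻¹
  have hH := hitting_eq_sub_inv_kemenySnell_mul hP hπ hM
    (one_sub_mul_eq_of_hitting_rec hstat hπ hπ0 hHrec)
  have hterm : ∀ j, π j * H i j = Z j j - Z i j := fun j => by
    have hij := congrFun (congrFun hH i) j
    have hjj := congrFun (congrFun hH j) j
    simp only [Matrix.sub_apply, vecMulVec_apply, mul_diagonal, Pi.one_apply, Pi.inv_apply,
      one_mul, hH0] at hij hjj
    rw [hij]
    field_simp [hπ0 j] at hjj ⊢
    linarith
  have hrow : ∑ j, Z i j = 1 := by
    simpa [mulVec, dotProduct] using congrFun (inv_kemenySnell_mulVec_one hP hπ hM) i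
  rw [Finset.sum_congr rfl fun j _ => hterm j, Finset.sum_sub_distrib, hrow, trace]
  rfl

end MarkovChain

theorem stmt_10_general {n : ℕ} (hn : 1 ≤ n)
    (P : Matrix (Fin n) (Fin n) ℝ)
    (hProw : ∀ x, ∑ y, P x y = 1)
    (π : Fin n → ℝ) (hπpos : ∀ x, 0 < π x) (hπsum : ∑ x, π x = 1)
    (hstat : ∀ y, ∑ x, π x * P x y = π y)
    (α : Fin n → ℝ)
    (hα1 : α ⟨0, hn⟩ = 1) (hαlt : ∀ k : Fin n, k ≠ ⟨0, hn⟩ → α k < 1)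
    (hchar : P.charpoly = ∏ k : Fin n, (X - C (α k)))
    (H : Fin n → Fin n → ℝ)
    (hH0 : ∀ x, H x x = 0)
    (hHrec : ∀ x y, x ≠ y → H x y = 1 + ∑ z, P x z * H z y) :
    ∀ i : Fin n, ∑ j, π j * H i j = ∑ k ∈ Finset.univ \ {(⟨0, hn⟩ : Fin n)}, 1 / (1 - α k) := by
  intro i
  set k₀ : Fin n := ⟨0, hn⟩
  have hP : P *ᵥ 1 = 1 := funext fun x => by simpa [mulVec, dotProduct] using hProw x
  have hstat' : π ᵥ* P = π := funext fun y => by simpa [vecMul, dotProduct] using hstat y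
  have hcharM := charpoly_kemenySnell (π := π) hP hπsum hchar hα1
  have hμ : ∀ k, Function.update (fun k => 1 - α k) k₀ 1 k ≠ 0 := fun k => by
    rcases eq_or_ne k k₀ with rfl | hk
    · simp
    · simpa [Function.update_of_ne hk, sub_eq_zero] using (hαlt k hk).ne'
  have hM : IsUnit (kemenySnell P π).det := by
    rw [isUnit_iff_ne_zero, det_eq_prod_of_charpoly_eq_prod hcharM]
    exact Finset.prod_ne_zero_iff.2 fun k _ => hμ k
  rw [sum_mul_hitting_eq_trace_inv_kemenySnell_sub_one hP hstat' hπsum (fun x => (hπpos x).ne')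
    hH0 hHrec hM, trace_inv_eq_sum_inv_of_charpoly_eq_prod hcharM hμ,
    Finset.sum_eq_add_sum_sdiff_singleton_of_mem (Finset.mem_univ k₀), Function.update_self,
    inv_one, add_sub_cancel_left]
  refine Finset.sum_congr rfl fun k hk => ?_
  rw [Function.update_of_ne (Finset.notMem_singleton.1 (Finset.mem_sdiff.1 hk).2), one_div]

/-- Random Target Lemma: for an irreducible reversible Markov chain on `{1,…,n}` with
transition matrix `P`, stationary distribution `π`, and (real) eigenvalues
`1 = α₁ > α₂ ≥ … ≥ α_n`, the quantity `Σ_j π_j H(i,j)` is independent of `i` and equals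
`Σ_{k=2}^n 1/(1 - α_k)`. -/
theorem stmt_10 {n : ℕ} (hn : 1 ≤ n)
    (P : Matrix (Fin n) (Fin n) ℝ)
    (hPnonneg : ∀ x y, 0 ≤ P x y)
    (hProw : ∀ x, ∑ y, P x y = 1)
    (hirr : ∀ x y : Fin n, ∃ k : ℕ, 0 < (P ^ k) x y)
    (π : Fin n → ℝ) (hπpos : ∀ x, 0 < π x) (hπsum : ∑ x, π x = 1)
    (hstat : ∀ y, ∑ x, π x * P x y = π y)
    (hrev : ∀ x y, π x * P x y = π y * P y x)
    (α : Fin n → ℝ) (hα : Antitone α)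
    (hα1 : α ⟨0, hn⟩ = 1) (hαlt : ∀ k : Fin n, k ≠ ⟨0, hn⟩ → α k < 1)
    (hchar : P.charpoly = ∏ k : Fin n, (X - C (α k)))
    (H : Fin n → Fin n → ℝ)
    (hH0 : ∀ x, H x x = 0)
    (hHrec : ∀ x y, x ≠ y → H x y = 1 + ∑ z, P x z * H z y) :
    ∀ i : Fin n, ∑ j, π j * H i j = ∑ k ∈ Finset.univ \ {(⟨0, hn⟩ : Fin n)}, 1 / (1 - α k) :=
  stmt_10_general hn P hProw π hπpos hπsum hstat α hα1 hαlt hchar H hH0 hHrec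
end

section
/- For the lazy random walk Z on a connected graph G with n vertices, m edges and diameter D, the second largest eigenvalue of its transition matrix P satisfies α₂(P) ≤ 1 - 1/(2nmD). -/
/-!
With `L` the Laplacian of `G`, `P = 1 - L / m`, so an eigenvector `v` of `P` for `μ ≠ 1` is an
eigenvector of `L` for `m (1 - μ) ≠ 0` and is therefore orthogonal to the constants. Choosing `x`
maximizing `v x ^ 2` and `y` with `v x * v y ≤ 0` gives `∑ v² ≤ n (v x - v y)²`, and
Cauchy–Schwarz along a shortest `x`–`y` path bounds `(v x - v y)²` by `D` times the sum of
squared differences over all darts, which is `2 vᵀ L v = 2 m (1 - μ) ∑ v²`.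
-/

open Finset Matrix

namespace SimpleGraph

variable {V : Type*} {G : SimpleGraph V}

theorem Walk.sum_darts_sub (v : V → ℝ) {a b : V} (p : G.Walk a b) :
    (p.darts.map fun d => v d.fst - v d.snd).sum = v a - v b := by
  induction p with
  | nil => simp
  | cons h p ih => simp [ih]

theorem Walk.IsPath.sq_sub_le_length_mul_sum_darts [Fintype V] [DecidableRel G.Adj]
    (v : V → ℝ) {a b : V} {p : G.Walk a b} (hp : p.IsPath) :
    (v a - v b) ^ 2 ≤ p.length * ∑ d : G.Dart, (v d.fst - v d.snd) ^ 2 := by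
  classical
  have hnodup : p.darts.Nodup := Walk.darts_nodup_of_support_nodup hp.support_nodup
  have hcard : #p.darts.toFinset = p.length := by
    rw [List.toFinset_card_of_nodup hnodup, Walk.length_darts]
  calc (v a - v b) ^ 2 = (∑ d ∈ p.darts.toFinset, (v d.fst - v d.snd)) ^ 2 := by
        rw [List.sum_toFinset _ hnodup, p.sum_darts_sub]
    _ ≤ p.length * ∑ d ∈ p.darts.toFinset, (v d.fst - v d.snd) ^ 2 := by
        rw [← hcard]; exact sq_sum_le_card_mul_sum_sq
    _ ≤ p.length * ∑ d : G.Dart, (v d.fst - v d.snd) ^ 2 := by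
        gcongr _ * ?_
        exact sum_le_univ_sum_of_nonneg fun _ => sq_nonneg _

variable [Fintype V] [DecidableRel G.Adj]

theorem sum_darts_sq_sub_eq_two_mul_dotProduct_lapMatrix [DecidableEq V] (v : V → ℝ) :
    ∑ d : G.Dart, (v d.fst - v d.snd) ^ 2 = 2 * (v ⬝ᵥ G.lapMatrix ℝ *ᵥ v) := by
  rw [← toLinearMap₂'_apply', lapMatrix_toLinearMap₂', mul_div_cancel₀ _ two_ne_zero,
    ← Fintype.sum_prod_type' (f := fun i j => if G.Adj i j then (v i - v j) ^ 2 else 0),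
    ← sum_filter]
  exact sum_bij (fun d _ => d.toProd) (fun d _ => by simp [d.adj])
    (fun _ _ _ _ h => Dart.toProd_injective h)
    (fun x hx => ⟨⟨x, by simpa using hx⟩, mem_univ _, rfl⟩) fun _ _ => rfl

theorem Connected.sum_sq_le_card_mul_diam_mul_sum_darts (hG : G.Connected) {v : V → ℝ}
    (hv : ∑ x, v x = 0) :
    ∑ x, v x ^ 2 ≤ Fintype.card V * G.diam * ∑ d : G.Dart, (v d.fst - v d.snd) ^ 2 := by
  have := hG.nonempty
  obtain ⟨x, hx⟩ := Finite.exists_max fun x => v x ^ 2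
  obtain ⟨y, -, hy⟩ : ∃ y ∈ univ, v x * v y ≤ 0 :=
    exists_le_of_sum_le univ_nonempty (by simp [← mul_sum, hv])
  obtain ⟨p, hp, hlen⟩ := hG.exists_path_of_dist x y
  have hdiam : (p.length : ℝ) ≤ G.diam := by
    rw [hlen]; exact_mod_cast dist_le_diam (connected_iff_ediam_ne_top.mp hG)
  calc ∑ x, v x ^ 2 ≤ Fintype.card V * v x ^ 2 := by
        simpa using sum_le_card_nsmul univ _ _ fun y _ => hx y
    _ ≤ Fintype.card V * (v x - v y) ^ 2 := by gcongr _ * ?_; nlinarith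
    _ ≤ Fintype.card V * (p.length * ∑ d : G.Dart, (v d.fst - v d.snd) ^ 2) := by
        gcongr; exact hp.sq_sub_le_length_mul_sum_darts v
    _ ≤ _ := by
        rw [← mul_assoc]; gcongr

variable [DecidableEq V]

theorem sum_eq_zero_of_lapMatrix_mulVec_eq_smul {v : V → ℝ} {μ : ℝ} (hμ : μ ≠ 0)
    (hv : G.lapMatrix ℝ *ᵥ v = μ • v) : ∑ x, v x = 0 := by
  have h : (fun _ => (1 : ℝ)) ᵥ* G.lapMatrix ℝ = 0 := by
    rw [← mulVec_transpose, (G.isSymm_lapMatrix ℝ).eq, lapMatrix_mulVec_const_eq_zero]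
  have := congrArg (fun w => (fun _ => (1 : ℝ)) ⬝ᵥ w) hv
  simp only [dotProduct_mulVec, h, zero_dotProduct, dotProduct_smul, smul_eq_mul] at this
  simpa [hμ, dotProduct] using this.symm

theorem Connected.one_le_two_mul_card_mul_diam_mul_of_lapMatrix_mulVec_eq_smul
    (hG : G.Connected) {v : V → ℝ} (hv0 : v ≠ 0) {μ : ℝ} (hμ : μ ≠ 0)
    (hv : G.lapMatrix ℝ *ᵥ v = μ • v) :
    1 ≤ 2 * Fintype.card V * G.diam * μ := by
  have hS : 0 < ∑ x, v x ^ 2 := by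
    obtain ⟨x, hx⟩ := Function.ne_iff.mp hv0
    exact sum_pos' (fun _ _ => sq_nonneg _) ⟨x, mem_univ x, sq_pos_of_ne_zero hx⟩
  have hE : ∑ d : G.Dart, (v d.fst - v d.snd) ^ 2 = 2 * μ * ∑ x, v x ^ 2 := by
    rw [sum_darts_sq_sub_eq_two_mul_dotProduct_lapMatrix, hv, dotProduct_smul, smul_eq_mul,
      dotProduct]
    simp only [sq, mul_sum, mul_assoc]
  have := hG.sum_sq_le_card_mul_diam_mul_sum_darts (sum_eq_zero_of_lapMatrix_mulVec_eq_smul hμ hv)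
  rw [hE] at this
  nlinarith

theorem eq_one_sub_inv_smul_lapMatrix_of_apply {P : Matrix V V ℝ} {c : ℝ}
    (hP : ∀ x y, P x y =
      if x = y then 1 - (G.degree x : ℝ) / c else if G.Adj x y then 1 / c else 0) :
    P = 1 - c⁻¹ • G.lapMatrix ℝ := by
  ext x y
  rw [hP]
  by_cases hxy : x = y
  · subst hxy; simp [lapMatrix, degMatrix, div_eq_mul_inv, mul_comm]
  · by_cases h : G.Adj x y <;> simp [lapMatrix, degMatrix, hxy, h]

end SimpleGraph

open SimpleGraph in
theorem stmt_11_general {V : Type*} [Fintype V] [DecidableEq V]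
    (G : SimpleGraph V) [DecidableRel G.Adj] (hconn : G.Connected)
    (n m D : ℕ) (hn : n = Fintype.card V) (hD : D = G.diam)
    (P : Matrix V V ℝ)
    (hP : ∀ x y, P x y =
      if x = y then 1 - (G.degree x : ℝ) / m
      else if G.Adj x y then 1 / m else 0) :
    ∀ (μ : ℝ) (v : V → ℝ), v ≠ 0 → P.mulVec v = μ • v → μ ≠ 1 →
      μ ≤ 1 - 1 / (2 * n * m * D) := by
  intro μ v hv hPv hμ
  rw [eq_one_sub_inv_smul_lapMatrix_of_apply hP, sub_mulVec, one_mulVec, smul_mulVec] at hPv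
  have hLv : (m : ℝ)⁻¹ • (G.lapMatrix ℝ *ᵥ v) = (1 - μ) • v := by
    rw [sub_smul, one_smul, ← hPv, sub_sub_cancel]
  -- for `m = 0` the junk value `0⁻¹ = 0` makes `P = 1`, which has no eigenvalue `μ ≠ 1`
  have hm0 : (m : ℝ) ≠ 0 := by
    intro h
    rw [h, _root_.inv_zero, zero_smul, eq_comm, smul_eq_zero, sub_eq_zero] at hLv
    exact hμ (hLv.resolve_right hv).symm
  have hgap := hconn.one_le_two_mul_card_mul_diam_mul_of_lapMatrix_mulVec_eq_smul hv
    (mul_ne_zero hm0 (sub_ne_zero.mpr hμ.symm))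
    (by rw [mul_smul, ← hLv, smul_inv_smul₀ hm0])
  subst hn hD
  have hgap' : 1 ≤ (2 * Fintype.card V * m * G.diam : ℝ) * (1 - μ) := by linarith
  have hpos : (0 : ℝ) < 2 * Fintype.card V * m * G.diam :=
    lt_of_le_of_ne (by positivity) fun h => by rw [← h, zero_mul] at hgap'; linarith
  rwa [le_sub_comm, div_le_iff₀ hpos, mul_comm]

/-- For the lazy random walk `Z` on a connected graph `G` with `n` vertices, `m` edges and
diameter `D`, the second largest eigenvalue of its transition matrix `P` satisfies
`α₂(P) ≤ 1 - 1/(2nmD)` (every eigenvalue of `P` other than `1` obeys this bound). -/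
theorem stmt_11 {V : Type*} [Fintype V] [DecidableEq V]
    (G : SimpleGraph V) [DecidableRel G.Adj] (hconn : G.Connected)
    (hcard : 2 ≤ Fintype.card V)
    (n m D : ℕ) (hn : n = Fintype.card V) (hm : m = G.edgeFinset.card) (hD : D = G.diam)
    (P : Matrix V V ℝ)
    (hP : ∀ x y, P x y =
      if x = y then 1 - (G.degree x : ℝ) / m
      else if G.Adj x y then 1 / m else 0) :
    ∀ (μ : ℝ) (v : V → ℝ), v ≠ 0 → P.mulVec v = μ • v → μ ≠ 1 →
      μ ≤ 1 - 1 / (2 * n * m * D) :=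
  stmt_11_general G hconn n m D hn hD P hP
end

section
/- Let M(x,y) be the expected meeting time of the virtual process on a connected graph G with m edges, and let S(x,y) = Φ(x,y)/2 where Φ(x,y) = H_Z(x,y) + H_Z(y,w) - H_Z(w,y) for the lazy walk Z and a hidden vertex w. If both M and S satisfy the recursion F(x,y) = m/(d(x)+d(y)) + (1/(d(x)+d(y)))(Σ_{j∈N(x)} F(j,y) + Σ_{j∈N(y)} F(j,x)) for all x ≠ y, with boundary value 0 on the diagonal matched at (w,w), then M(x,y) = S(x,y) for all x, y; in particular M(x,y) = (1/2)H_Z(x,y) when Z is symmetric. -/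
/-!
`M` and `S` solve the same inhomogeneous linear system off the diagonal and agree on it, so
their difference is harmonic off the diagonal with zero boundary values. By the maximum
principle it vanishes: a maximum of a harmonic function off the diagonal is attained at every
neighbour in the first coordinate, so moving the first coordinate along a path to the second
one carries the maximum to the diagonal. Finally `S = H_Z / 2` because `H_Z(y,w) = H_Z(w,y)`.
-/

open Finset

namespace SimpleGraph

variable {V : Type*} [Fintype V] (G : SimpleGraph V) [DecidableRel G.Adj]

/-- The second sum reads `f` at `(j, x)`, not `(x, j)`, as in the meeting-time recursion. -/
def IsHarmonicOffDiag (f : V → V → ℝ) : Prop :=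
  ∀ x y, x ≠ y → ((G.degree x : ℝ) + G.degree y) * f x y =
    (∑ j ∈ G.neighborFinset x, f j y) + ∑ j ∈ G.neighborFinset y, f j x

def SolvesRecursionOffDiag (s f : V → V → ℝ) : Prop :=
  ∀ x y, x ≠ y → f x y = s x y + ((G.degree x : ℝ) + G.degree y)⁻¹ *
    ((∑ j ∈ G.neighborFinset x, f j y) + ∑ j ∈ G.neighborFinset y, f j x)

variable {G}

lemma isHarmonicOffDiag_sub_of_recursion (hG : G.Connected) {f g s : V → V → ℝ}
    (hf : G.SolvesRecursionOffDiag s f) (hg : G.SolvesRecursionOffDiag s g) :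
    G.IsHarmonicOffDiag fun x y => f x y - g x y := by
  intro x y hxy
  have hdeg : ((G.degree x : ℝ) + G.degree y) ≠ 0 := by
    have := (hG x y).degree_pos_left hxy
    positivity
  beta_reduce
  rw [hf x y hxy, hg x y hxy, sum_sub_distrib, sum_sub_distrib]
  field_simp
  ring

namespace IsHarmonicOffDiag

variable {f : V → V → ℝ} {c : ℝ}

lemma apply_eq_of_forall_le (hf : G.IsHarmonicOffDiag f) (hmax : ∀ x y, f x y ≤ c)
    {a b : V} (hab : a ≠ b) (hfab : f a b = c) : ∀ j ∈ G.neighborFinset a, f j b = c := by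
  have hgap : (∑ j ∈ G.neighborFinset a, (c - f j b))
      + ∑ j ∈ G.neighborFinset b, (c - f j a) = 0 := by
    simp only [sum_sub_distrib, sum_const, card_neighborFinset_eq_degree, nsmul_eq_mul]
    have hmean := hf a b hab
    rw [hfab] at hmean
    linarith
  have hgap_a : ∑ j ∈ G.neighborFinset a, (c - f j b) = 0 :=
    (add_eq_zero_iff_of_nonneg (sum_nonneg fun j _ => sub_nonneg.2 (hmax j b))
      (sum_nonneg fun j _ => sub_nonneg.2 (hmax j a))).1 hgap |>.1
  intro j hj
  have := (sum_eq_zero_iff_of_nonneg fun j _ => sub_nonneg.2 (hmax j b)).1 hgap_a j hj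
  linarith

lemma exists_diag_eq_of_forall_le (hf : G.IsHarmonicOffDiag f) (hmax : ∀ x y, f x y ≤ c)
    {a b : V} (p : G.Walk a b) (hfab : f a b = c) : ∃ z, f z z = c := by
  induction p with
  | nil => exact ⟨_, hfab⟩
  | @cons a j b hadj p ih =>
    by_cases hab : a = b
    · exact ⟨a, hab ▸ hfab⟩
    · exact ih (hf.apply_eq_of_forall_le hmax hab hfab j ((G.mem_neighborFinset a j).2 hadj))

lemma le_of_forall_diag_le (hf : G.IsHarmonicOffDiag f) (hG : G.Connected)
    (hdiag : ∀ z, f z z ≤ c) (x y : V) : f x y ≤ c := by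
  obtain ⟨p, -, hp⟩ := exists_max_image univ (fun p : V × V => f p.1 p.2) ⟨(x, y), mem_univ _⟩
  obtain ⟨z, hz⟩ := hf.exists_diag_eq_of_forall_le (fun x y => hp (x, y) (mem_univ _))
    (hG p.1 p.2).some rfl
  exact (hp (x, y) (mem_univ _)).trans (hz ▸ hdiag z)

end IsHarmonicOffDiag

lemma eq_of_recursion_of_diag_eq (hG : G.Connected) {f g s : V → V → ℝ}
    (hf : G.SolvesRecursionOffDiag s f) (hg : G.SolvesRecursionOffDiag s g)
    (hdiag : ∀ z, f z z = g z z) : f = g := by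
  funext x y
  have hfg := (isHarmonicOffDiag_sub_of_recursion hG hf hg).le_of_forall_diag_le hG
    (c := 0) (fun z => by simp [hdiag z]) x y
  have hgf := (isHarmonicOffDiag_sub_of_recursion hG hg hf).le_of_forall_diag_le hG
    (c := 0) (fun z => by simp [hdiag z]) x y
  linarith

end SimpleGraph

theorem stmt_19_general {V : Type*} [Fintype V]
    (G : SimpleGraph V) [DecidableRel G.Adj] (hconn : G.Connected)
    (m : ℕ)
    (M HZ : V → V → ℝ) (w : V)
    (hH0 : ∀ x, HZ x x = 0)
    (hsymw : ∀ y, HZ y w = HZ w y)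
    (hMdiag : ∀ x, M x x = 0)
    (hMrec : ∀ x y, x ≠ y →
      M x y = (m : ℝ) / ((G.degree x : ℝ) + G.degree y)
        + (((G.degree x : ℝ) + G.degree y))⁻¹ *
          ((∑ j ∈ G.neighborFinset x, M j y) + ∑ j ∈ G.neighborFinset y, M j x))
    (hSrec : ∀ x y, x ≠ y →
      (HZ x y + HZ y w - HZ w y) / 2 = (m : ℝ) / ((G.degree x : ℝ) + G.degree y)
        + (((G.degree x : ℝ) + G.degree y))⁻¹ *
          ((∑ j ∈ G.neighborFinset x, (HZ j y + HZ y w - HZ w y) / 2)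
            + ∑ j ∈ G.neighborFinset y, (HZ j x + HZ x w - HZ w x) / 2)) :
    ∀ x y : V, M x y = (HZ x y + HZ y w - HZ w y) / 2 ∧ M x y = HZ x y / 2 := by
  set S : V → V → ℝ := fun x y => (HZ x y + HZ y w - HZ w y) / 2
  have hS : ∀ x y, S x y = HZ x y / 2 := fun x y => by simp only [S, hsymw y]; ring
  have hMS : M = S := G.eq_of_recursion_of_diag_eq hconn
    (s := fun x y => (m : ℝ) / ((G.degree x : ℝ) + G.degree y)) hMrec hSrec
    (fun z => by rw [hMdiag, hS, hH0, zero_div])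
  exact fun x y => ⟨congrFun₂ hMS x y, (congrFun₂ hMS x y).trans (hS x y)⟩

/-- Let `M(x,y)` be the expected meeting time of the virtual process on a connected graph
`G` with `m` edges, and let `S(x,y) = Φ(x,y)/2` where `Φ(x,y) = H_Z(x,y)+H_Z(y,w)-H_Z(w,y)`
for the lazy walk `Z` and a hidden vertex `w`. If both `M` and `S` satisfy the recursion
`F(x,y) = m/(d(x)+d(y)) + (1/(d(x)+d(y)))(Σ_{j∈N(x)} F(j,y) + Σ_{j∈N(y)} F(j,x))` for all
`x ≠ y`, with boundary value `0` on the diagonal, then `M = S`; in particular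
`M(x,y) = (1/2) H_Z(x,y)` since `Z` is symmetric. -/
theorem stmt_19 {V : Type*} [Fintype V] [DecidableEq V]
    (G : SimpleGraph V) [DecidableRel G.Adj] (hconn : G.Connected)
    (hcard : 2 ≤ Fintype.card V)
    (m : ℕ) (hm : m = G.edgeFinset.card)
    (hdeg : ∀ u v : V, G.Adj u v → G.degree u + G.degree v ≤ m)
    (M HZ : V → V → ℝ) (w : V)
    (hH0 : ∀ x, HZ x x = 0)
    (hsymw : ∀ y, HZ y w = HZ w y)
    (hMdiag : ∀ x, M x x = 0)
    (hMrec : ∀ x y, x ≠ y →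
      M x y = (m : ℝ) / ((G.degree x : ℝ) + G.degree y)
        + (((G.degree x : ℝ) + G.degree y))⁻¹ *
          ((∑ j ∈ G.neighborFinset x, M j y) + ∑ j ∈ G.neighborFinset y, M j x))
    (hSrec : ∀ x y, x ≠ y →
      (HZ x y + HZ y w - HZ w y) / 2 = (m : ℝ) / ((G.degree x : ℝ) + G.degree y)
        + (((G.degree x : ℝ) + G.degree y))⁻¹ *
          ((∑ j ∈ G.neighborFinset x, (HZ j y + HZ y w - HZ w y) / 2)
            + ∑ j ∈ G.neighborFinset y, (HZ j x + HZ x w - HZ w x) / 2)) :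
    ∀ x y : V, M x y = (HZ x y + HZ y w - HZ w y) / 2 ∧ M x y = HZ x y / 2 :=
  stmt_19_general G hconn m M HZ w hH0 hsymw hMdiag hMrec hSrec
end
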